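/- arXiv:1207.4533 — 2 statements merged into one kernel-verified Lean document; each statement's English description precedes it below -/
import Mathlib

section
/- In G, the element (a^s u^i v)^2 equals a^(2^(l-1)) if i is even and s is odd, and equals 1 if i is odd or s is even. -/
/-!
Since `v` is an involution inverting `u` and acting on `⟨a⟩` by `a ↦ a ^ n₂`, one has
`(a^s u^i v)^2 = a^s · u^i a^(n₂ s) u^(-i)`. Conjugation by `u` multiplies exponents of `a` by
`n₁`, and `n₁² ≡ 1 (mod 2^l)`, so `u²` centralizes `a` and only the parity of `i` matters:
the square is `a^((1 + n₂) s) = a^(2^(l-1) s)` for even `i`, and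
`a^((1 + n₁ n₂) s) = a^(2^(2l-2) s) = 1` for odd `i`.
-/

namespace ZkDl

def n₁ (l : ℕ) : ℕ := 2 ^ (l - 1) + 1
def n₂ (l : ℕ) : ℕ := 2 ^ (l - 1) - 1

/-- The relations of the presentation
`⟨a, u, v | a^(2^l) = u^k = v^2 = 1, u a u⁻¹ = a^(n₁), v a v = a^(n₂), v u v = u⁻¹⟩`,
with generators `a = 0`, `u = 1`, `v = 2` in `Fin 3`. -/
def rels (l k : ℕ) : Set (FreeGroup (Fin 3)) :=
  { FreeGroup.of 0 ^ 2 ^ l,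
    FreeGroup.of 1 ^ k,
    FreeGroup.of 2 ^ 2,
    FreeGroup.of 1 * FreeGroup.of 0 * (FreeGroup.of 1)⁻¹ * (FreeGroup.of 0 ^ n₁ l)⁻¹,
    FreeGroup.of 2 * FreeGroup.of 0 * FreeGroup.of 2 * (FreeGroup.of 0 ^ n₂ l)⁻¹,
    FreeGroup.of 2 * FreeGroup.of 1 * FreeGroup.of 2 * FreeGroup.of 1 }

/-- The group `Z_{2^l} ⋊ D_k` given by the presentation above. -/
abbrev G (l k : ℕ) : Type := PresentedGroup (rels l k)

def a (l k : ℕ) : G l k := PresentedGroup.of 0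
def u (l k : ℕ) : G l k := PresentedGroup.of 1
def v (l k : ℕ) : G l k := PresentedGroup.of 2

end ZkDl

section ConjugationAction

variable {H : Type*} [Group H] {a u v : H}

theorem zpow_eq_zpow_of_modEq {N : ℕ} (ha : a ^ N = 1) {m m' : ℤ} (h : m ≡ m' [ZMOD N]) :
    a ^ m = a ^ m' :=
  zpow_eq_zpow_iff_modEq.mpr <|
    h.of_dvd <| Int.natCast_dvd_natCast.mpr (orderOf_dvd_of_pow_eq_one ha)

theorem conj_zpow_eq_zpow_mul {n : ℤ} (h : u * a * u⁻¹ = a ^ n) (m : ℤ) :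
    u * a ^ m * u⁻¹ = a ^ (n * m) := by
  rw [← conj_zpow, h, ← zpow_mul]

theorem commute_sq_of_conj_eq_zpow {n : ℤ} (h : u * a * u⁻¹ = a ^ n) (hn : a ^ (n * n) = a) :
    Commute (u * u) a := by
  have hconj : u * u * a * (u * u)⁻¹ = a := by
    calc u * u * a * (u * u)⁻¹ = u * (u * a * u⁻¹) * u⁻¹ := by group
      _ = a := by rw [h, conj_zpow_eq_zpow_mul h, hn]
  exact mul_inv_eq_iff_eq_mul.mp hconj

theorem conj_zpow_of_even {n : ℤ} (h : u * a * u⁻¹ = a ^ n) (hn : a ^ (n * n) = a) {i : ℤ}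
    (hi : Even i) (m : ℤ) : u ^ i * a ^ m * (u ^ i)⁻¹ = a ^ m := by
  obtain ⟨j, rfl⟩ := hi
  have hu : u ^ (j + j) = (u * u) ^ j := by rw [zpow_add, (Commute.refl u).mul_zpow]
  rw [hu, ((commute_sq_of_conj_eq_zpow h hn).zpow_zpow j m).eq, mul_inv_cancel_right]

theorem conj_zpow_of_odd {n : ℤ} (h : u * a * u⁻¹ = a ^ n) (hn : a ^ (n * n) = a) {i : ℤ}
    (hi : Odd i) (m : ℤ) : u ^ i * a ^ m * (u ^ i)⁻¹ = a ^ (n * m) := by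
  obtain ⟨j, rfl⟩ := hi
  calc u ^ (2 * j + 1) * a ^ m * (u ^ (2 * j + 1))⁻¹
      = u ^ (2 * j) * (u * a ^ m * u⁻¹) * (u ^ (2 * j))⁻¹ := by rw [zpow_add_one]; group
    _ = a ^ (n * m) := by
      rw [conj_zpow_eq_zpow_mul h, conj_zpow_of_even h hn (even_two_mul j)]

theorem sq_zpow_mul_zpow_mul {n : ℤ} (hv : v * v = 1) (hva : v * a * v = a ^ n)
    (hvu : v * u * v = u⁻¹) (s i : ℤ) :
    (a ^ s * u ^ i * v) ^ 2 = a ^ s * (u ^ i * a ^ (n * s) * (u ^ i)⁻¹) := by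
  have hvinv : v⁻¹ = v := inv_eq_of_mul_eq_one_right hv
  have hva' : v * a * v⁻¹ = a ^ n := by rwa [hvinv]
  have hvu' : v * u * v⁻¹ = u⁻¹ := by rwa [hvinv]
  calc (a ^ s * u ^ i * v) ^ 2
      = a ^ s * u ^ i * (v * a ^ s * v⁻¹) * (v * u ^ i * v⁻¹) * (v * v) := by rw [sq]; group
    _ = a ^ s * (u ^ i * a ^ (n * s) * (u ^ i)⁻¹) := by
      rw [conj_zpow_eq_zpow_mul hva', ← conj_zpow, hvu', hv, inv_zpow]; group

end ConjugationAction

namespace ZkDl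

variable {l k : ℕ}

theorem a_pow_two_pow : a l k ^ 2 ^ l = 1 :=
  PresentedGroup.one_of_mem (by simp [rels])

theorem v_mul_v : v l k * v l k = 1 := by
  rw [← sq]
  exact PresentedGroup.one_of_mem (by simp [rels])

theorem u_mul_a_mul_u_inv : u l k * a l k * (u l k)⁻¹ = a l k ^ (n₁ l : ℤ) := by
  rw [zpow_natCast]
  exact PresentedGroup.mk_eq_mk_of_mul_inv_mem (by simp [rels])

theorem v_mul_a_mul_v : v l k * a l k * v l k = a l k ^ (n₂ l : ℤ) := by
  rw [zpow_natCast]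
  exact PresentedGroup.mk_eq_mk_of_mul_inv_mem (by simp [rels])

theorem v_mul_u_mul_v : v l k * u l k * v l k = (u l k)⁻¹ :=
  eq_inv_of_mul_eq_one_left (PresentedGroup.one_of_mem (by simp [rels]))

theorem n₁_cast : (n₁ l : ℤ) = 2 ^ (l - 1) + 1 := by
  simp [n₁]

theorem n₂_cast : (n₂ l : ℤ) = 2 ^ (l - 1) - 1 := by
  simp [n₂, Nat.cast_sub Nat.one_le_two_pow]

theorem a_zpow_eq_of_modEq {m m' : ℤ} (h : m ≡ m' [ZMOD 2 ^ l]) : a l k ^ m = a l k ^ m' :=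
  zpow_eq_zpow_of_modEq a_pow_two_pow (by exact_mod_cast h)

theorem a_zpow_n₁_mul_n₁ (hl : 2 ≤ l) : a l k ^ ((n₁ l : ℤ) * n₁ l) = a l k := by
  obtain ⟨j, rfl⟩ : ∃ j, l = j + 2 := ⟨l - 2, by omega⟩
  conv_rhs => rw [← zpow_one (a _ k)]
  refine a_zpow_eq_of_modEq (Int.modEq_iff_dvd.mpr ⟨-(2 ^ j + 1), ?_⟩)
  rw [n₁_cast, show j + 2 - 1 = j + 1 by omega]
  ring

theorem sq_eq_of_even (hl : 2 ≤ l) {i : ℤ} (hi : Even i) (s : ℤ) :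
    (a l k ^ s * u l k ^ i * v l k) ^ 2 = a l k ^ (2 ^ (l - 1) * s) := by
  rw [sq_zpow_mul_zpow_mul v_mul_v v_mul_a_mul_v v_mul_u_mul_v,
    conj_zpow_of_even u_mul_a_mul_u_inv (a_zpow_n₁_mul_n₁ hl) hi, ← zpow_add, n₂_cast]
  ring_nf

theorem sq_eq_one_of_odd (hl : 2 ≤ l) {i : ℤ} (hi : Odd i) (s : ℤ) :
    (a l k ^ s * u l k ^ i * v l k) ^ 2 = 1 := by
  obtain ⟨j, rfl⟩ : ∃ j, l = j + 2 := ⟨l - 2, by omega⟩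
  rw [sq_zpow_mul_zpow_mul v_mul_v v_mul_a_mul_v v_mul_u_mul_v,
    conj_zpow_of_odd u_mul_a_mul_u_inv (a_zpow_n₁_mul_n₁ hl) hi, ← zpow_add,
    ← zpow_zero (a _ k)]
  refine a_zpow_eq_of_modEq (Int.modEq_iff_dvd.mpr ⟨-(2 ^ j * s), ?_⟩)
  rw [n₁_cast, n₂_cast, show j + 2 - 1 = j + 1 by omega]
  ring

end ZkDl

open ZkDl

theorem sq_of_asuiv_general (l k : ℕ) (hl : 3 ≤ l) (s i : ℤ) :
    (Even i ∧ Odd s →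
      (a l k ^ s * u l k ^ i * v l k) ^ 2 = a l k ^ (2 ^ (l - 1)) ) ∧
    (Odd i ∨ Even s →
      (a l k ^ s * u l k ^ i * v l k) ^ 2 = 1) := by
  have hl₂ : 2 ≤ l := by omega
  have hl₁ : (2 : ℤ) ^ (l - 1) * 2 = 2 ^ l := pow_sub_one_mul (by omega) 2
  refine ⟨fun ⟨hi, t, hs⟩ => ?_, fun h => ?_⟩
  · rw [sq_eq_of_even hl₂ hi, ← zpow_natCast]
    refine a_zpow_eq_of_modEq (Int.modEq_iff_dvd.mpr ⟨-t, ?_⟩)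
    rw [hs, ← hl₁]
    push_cast
    ring
  · rcases h with hi | ⟨t, rfl⟩
    · exact sq_eq_one_of_odd hl₂ hi s
    rcases Int.even_or_odd i with hi | hi
    · rw [sq_eq_of_even hl₂ hi, ← zpow_zero (a l k)]
      refine a_zpow_eq_of_modEq (Int.modEq_iff_dvd.mpr ⟨-t, ?_⟩)
      rw [← hl₁]
      ring
    · exact sq_eq_one_of_odd hl₂ hi _

theorem sq_of_asuiv (l k : ℕ) (hl : 3 ≤ l) (hk : 4 ∣ k) (s i : ℤ) :
    (Even i ∧ Odd s →
      (a l k ^ s * u l k ^ i * v l k) ^ 2 = a l k ^ (2 ^ (l - 1)) ) ∧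
    (Odd i ∨ Even s →
      (a l k ^ s * u l k ^ i * v l k) ^ 2 = 1) :=
  sq_of_asuiv_general l k hl s i
end

section
/- For any element of the form a^s u^(2i) not in the center of G, its centralizer is ⟨a, u⟩ if s is even and ⟨a, u^2⟩ if s is odd; in either case the centralizer is a normal subgroup of G. -/
/-!
`u²` commutes with `a` because `n₁² ≡ 1 (mod 2^l)`, so `g = a^s u^(2i)` always commutes with `a`
and `u²`, and with `u` as well when `s` is even, since then `n₁ s ≡ s`. The relations also put every
element in the form `a^p u^q v^e`.

For even `s`, `⟨a, u⟩` is the kernel of the parity of the `v`-exponent. A centralizing element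
outside it would bring `v` into the centralizer, and then `g` would be central.

For odd `s`, map `G` to the affine group of `ZMod (2^l)` by `a ↦ x + 1`, `u ↦ n₁ x`, `v ↦ n₂ x`.
There `g` becomes translation by the unit `s`, which commutes only with maps of linear part `1`.
The kernel of the linear part is `⟨a, u²⟩`, because `n₁`, `n₂` and `n₁ n₂ = -1` all differ from `1`.

In both cases the centralizer is a kernel, hence normal.
-/

theorem even_and_even_of_zpow_mul_pow_eq_one {M : Type*} [CommGroup M] {x y : M} (hx : x ^ 2 = 1)
    (hy : y ^ 2 = 1) (hx₁ : x ≠ 1) (hy₁ : y ≠ 1) (hxy : x * y ≠ 1) {q : ℤ} {e : ℕ}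
    (h : x ^ q * y ^ e = 1) : Even q ∧ Even e := by
  have hx' : x ^ (2 : ℤ) = 1 := by rw [zpow_ofNat, hx]
  rcases Int.even_or_odd' q with ⟨q, rfl | rfl⟩ <;>
    rcases Nat.even_or_odd' e with ⟨e, rfl | rfl⟩ <;>
    simp_all [zpow_add, zpow_mul, pow_add, pow_mul]

namespace ZkDl

open Multiplicative SemidirectProduct Subgroup

variable {l k : ℕ} {M : Type*} [Group M] {A U V : M}

theorem cast_n₁ : (n₁ l : ZMod (2 ^ l)) = 2 ^ (l - 1) + 1 := by
  simp [n₁]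

theorem cast_n₂ : (n₂ l : ZMod (2 ^ l)) = 2 ^ (l - 1) - 1 := by
  simp [n₂, Nat.cast_sub Nat.one_le_two_pow]

theorem two_pow_pred_mul_two (hl : 1 ≤ l) : (2 : ZMod (2 ^ l)) ^ (l - 1) * 2 = 0 := by
  rw [← pow_succ, Nat.sub_add_cancel hl]
  exact_mod_cast ZMod.natCast_self (2 ^ l)

theorem two_pow_pred_mul_self (hl : 2 ≤ l) :
    (2 : ZMod (2 ^ l)) ^ (l - 1) * 2 ^ (l - 1) = 0 := by
  calc (2 : ZMod (2 ^ l)) ^ (l - 1) * 2 ^ (l - 1) = 2 ^ (l - 1) * 2 * 2 ^ (l - 2) := by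
        rw [mul_assoc, ← pow_succ', show l - 2 + 1 = l - 1 by omega]
    _ = 0 := by rw [two_pow_pred_mul_two (by omega), zero_mul]

theorem n₁_mul_n₁ (hl : 2 ≤ l) : (n₁ l : ZMod (2 ^ l)) * n₁ l = 1 := by
  rw [cast_n₁]
  linear_combination two_pow_pred_mul_self hl + two_pow_pred_mul_two (l := l) (by omega)

theorem n₂_mul_n₂ (hl : 2 ≤ l) : (n₂ l : ZMod (2 ^ l)) * n₂ l = 1 := by
  rw [cast_n₂]
  linear_combination two_pow_pred_mul_self hl - two_pow_pred_mul_two (l := l) (by omega)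

theorem n₁_mul_n₂ (hl : 2 ≤ l) : (n₁ l : ZMod (2 ^ l)) * n₂ l = -1 := by
  rw [cast_n₁, cast_n₂]
  linear_combination two_pow_pred_mul_self hl

theorem n₁_mul_of_even (hl : 1 ≤ l) {s : ℤ} (hs : Even s) :
    (n₁ l : ZMod (2 ^ l)) * s = s := by
  obtain ⟨r, rfl⟩ := hs
  rw [cast_n₁]
  push_cast
  linear_combination r * two_pow_pred_mul_two hl

theorem n₁_ne_one (hl : 1 ≤ l) : (n₁ l : ZMod (2 ^ l)) ≠ 1 := by
  rw [n₁, Nat.cast_add, Nat.cast_one, Ne, add_eq_right, ZMod.natCast_eq_zero_iff]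
  exact Nat.not_dvd_of_pos_of_lt (by positivity) (Nat.pow_lt_pow_right (by norm_num) (by omega))

theorem n₂_ne_one (hl : 3 ≤ l) : (n₂ l : ZMod (2 ^ l)) ≠ 1 := by
  have h4 : 4 ≤ 2 ^ (l - 1) := by
    simpa using Nat.pow_le_pow_right (show 0 < 2 by norm_num) (show 2 ≤ l - 1 by omega)
  have hl' : 2 ^ l = 2 * 2 ^ (l - 1) := by rw [← pow_succ']; congr 1; omega
  rw [show n₂ l = (2 ^ (l - 1) - 2) + 1 by unfold n₂; omega, Nat.cast_add, Nat.cast_one, Ne,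
    add_eq_right, ZMod.natCast_eq_zero_iff]
  exact Nat.not_dvd_of_pos_of_lt (by omega) (by omega)

theorem neg_one_ne_one_of_two_le (hl : 2 ≤ l) : (-1 : ZMod (2 ^ l)) ≠ 1 := by
  have : Fact (2 < 2 ^ l) :=
    ⟨lt_of_lt_of_le (by norm_num) (Nat.pow_le_pow_right (show 0 < 2 by norm_num) hl)⟩
  exact ZMod.neg_one_ne_one

theorem isUnit_intCast_of_odd {s : ℤ} (hs : Odd s) : IsUnit (s : ZMod (2 ^ l)) := by
  rw [ZMod.coe_int_isUnit_iff_isCoprime]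
  push_cast
  exact (Int.isCoprime_two_left.mpr hs).pow_left

structure SatisfiesRels (l k : ℕ) {M : Type*} [Group M] (A U V : M) : Prop where
  pow_a : A ^ 2 ^ l = 1
  pow_u : U ^ k = 1
  sq_v : V ^ 2 = 1
  conj_u_a : U * A * U⁻¹ = A ^ n₁ l
  conj_v_a : V * A * V = A ^ n₂ l
  conj_v_u : V * U * V = U⁻¹

theorem satisfiesRels_a_u_v : SatisfiesRels l k (a l k) (u l k) (v l k) := by
  have hrel {r : FreeGroup (Fin 3)} (hr : r ∈ rels l k) : PresentedGroup.mk _ r = 1 :=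
    PresentedGroup.one_of_mem hr
  have ha : PresentedGroup.mk (rels l k) (FreeGroup.of 0) = a l k := rfl
  have hu : PresentedGroup.mk (rels l k) (FreeGroup.of 1) = u l k := rfl
  have hv : PresentedGroup.mk (rels l k) (FreeGroup.of 2) = v l k := rfl
  refine ⟨?_, ?_, ?_, ?_, ?_, ?_⟩
  · have := hrel (r := FreeGroup.of 0 ^ 2 ^ l) (by simp [rels])
    rwa [map_pow, ha] at this
  · have := hrel (r := FreeGroup.of 1 ^ k) (by simp [rels])
    rwa [map_pow, hu] at this
  · have := hrel (r := FreeGroup.of 2 ^ 2) (by simp [rels])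
    rwa [map_pow, hv] at this
  · have := hrel (r := FreeGroup.of 1 * FreeGroup.of 0 * (FreeGroup.of 1)⁻¹ *
      (FreeGroup.of 0 ^ n₁ l)⁻¹) (by simp [rels])
    rwa [map_mul, map_mul, map_mul, map_inv, map_inv, map_pow, ha, hu, mul_inv_eq_one] at this
  · have := hrel (r := FreeGroup.of 2 * FreeGroup.of 0 * FreeGroup.of 2 * (FreeGroup.of 0 ^ n₂ l)⁻¹)
      (by simp [rels])
    rwa [map_mul, map_mul, map_mul, map_inv, map_pow, ha, hv, mul_inv_eq_one] at this
  · have := hrel (r := FreeGroup.of 2 * FreeGroup.of 1 * FreeGroup.of 2 * FreeGroup.of 1)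
      (by simp [rels])
    rwa [map_mul, map_mul, map_mul, hu, hv, mul_eq_one_iff_eq_inv] at this

def lift (h : SatisfiesRels l k A U V) : G l k →* M :=
  PresentedGroup.toGroup (f := ![A, U, V]) (by
    simp only [rels, Set.mem_insert_iff, Set.mem_singleton_iff]
    rintro r (rfl | rfl | rfl | rfl | rfl | rfl) <;>
      simp [h.pow_a, h.pow_u, h.sq_v, h.conj_u_a, h.conj_v_a, h.conj_v_u])

namespace SatisfiesRels

variable (h : SatisfiesRels l k A U V)
include h

theorem zpow_a_eq_zpow {m n : ℤ} (hmn : (m : ZMod (2 ^ l)) = n) : A ^ m = A ^ n := by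
  rw [zpow_eq_zpow_iff_modEq]
  refine ((ZMod.intCast_eq_intCast_iff m n _).mp hmn).of_dvd ?_
  exact_mod_cast orderOf_dvd_of_pow_eq_one h.pow_a

theorem v_inv : V⁻¹ = V :=
  inv_eq_of_mul_eq_one_right (by rw [← sq, h.sq_v])

theorem u_mul_zpow_a (p : ℤ) : U * A ^ p = A ^ (n₁ l * p) * U := by
  rw [← mul_inv_eq_iff_eq_mul, ← conj_zpow, h.conj_u_a, ← zpow_natCast, ← zpow_mul]

theorem v_mul_zpow_a (p : ℤ) : V * A ^ p = A ^ (n₂ l * p) * V := by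
  rw [← mul_inv_eq_iff_eq_mul, ← conj_zpow, h.v_inv, h.conj_v_a, ← zpow_natCast, ← zpow_mul]

theorem v_mul_zpow_u (q : ℤ) : V * U ^ q = U ^ (-q) * V := by
  rw [← mul_inv_eq_iff_eq_mul, ← conj_zpow, h.v_inv, h.conj_v_u, zpow_neg, inv_zpow]

theorem u_inv_mul_zpow_a (hl : 2 ≤ l) (p : ℤ) : U⁻¹ * A ^ p = A ^ (n₁ l * p) * U⁻¹ := by
  rw [inv_mul_eq_iff_eq_mul, ← mul_assoc, h.u_mul_zpow_a, mul_inv_cancel_right, h.zpow_a_eq_zpow]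
  push_cast
  rw [← mul_assoc, n₁_mul_n₁ hl, one_mul]

theorem commute_u_sq_a (hl : 2 ≤ l) : Commute (U ^ 2) A := by
  calc U ^ 2 * A = U * (U * A ^ (1 : ℤ)) := by rw [zpow_one, sq, mul_assoc]
    _ = A ^ (n₁ l * (n₁ l * 1) : ℤ) * U ^ 2 := by
      rw [h.u_mul_zpow_a, ← mul_assoc, h.u_mul_zpow_a, sq, mul_assoc]
    _ = A * U ^ 2 := by
      rw [h.zpow_a_eq_zpow (n := 1), zpow_one]
      push_cast
      rw [mul_one, n₁_mul_n₁ hl]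

theorem commute_u_zpow_a_of_even (hl : 1 ≤ l) {s : ℤ} (hs : Even s) : Commute U (A ^ s) := by
  rw [Commute, SemiconjBy, h.u_mul_zpow_a, h.zpow_a_eq_zpow]
  push_cast
  exact n₁_mul_of_even hl hs

theorem exists_eq_zpow_mul_zpow_mul_pow (hl : 2 ≤ l) {x : M} (hx : x ∈ closure {A, U, V}) :
    ∃ (p q : ℤ) (e : ℕ), x = A ^ p * U ^ q * V ^ e := by
  induction hx using closure_induction_left with
  | one => exact ⟨0, 0, 0, by simp⟩
  | mul_left y hy _ _ ih =>
    obtain ⟨p, q, e, rfl⟩ := ih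
    rcases hy with hy | hy | hy <;> subst y
    · exact ⟨1 + p, q, e, by group⟩
    · refine ⟨n₁ l * p, q + 1, e, ?_⟩
      rw [← mul_assoc, ← mul_assoc, h.u_mul_zpow_a]
      group
    · refine ⟨n₂ l * p, -q, e + 1, ?_⟩
      rw [← mul_assoc, ← mul_assoc, h.v_mul_zpow_a, mul_assoc _ V, h.v_mul_zpow_u]
      group
  | inv_mul_cancel y hy _ _ ih =>
    obtain ⟨p, q, e, rfl⟩ := ih
    rcases hy with hy | hy | hy <;> subst y
    · exact ⟨-1 + p, q, e, by group⟩
    · refine ⟨n₁ l * p, q - 1, e, ?_⟩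
      rw [← mul_assoc, ← mul_assoc, h.u_inv_mul_zpow_a hl]
      group
    · refine ⟨n₂ l * p, -q, e + 1, ?_⟩
      rw [h.v_inv, ← mul_assoc, ← mul_assoc, h.v_mul_zpow_a, mul_assoc _ V, h.v_mul_zpow_u]
      group

end SatisfiesRels

section

variable (h : SatisfiesRels l k A U V)

@[simp] theorem lift_a : lift h (a l k) = A := PresentedGroup.toGroup.of _
@[simp] theorem lift_u : lift h (u l k) = U := PresentedGroup.toGroup.of _
@[simp] theorem lift_v : lift h (v l k) = V := PresentedGroup.toGroup.of _

end

theorem closure_a_u_v : closure {a l k, u l k, v l k} = ⊤ := by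
  refine eq_top_iff.mpr fun x _ => PresentedGroup.generated_by _ _ (fun j => ?_) x
  fin_cases j <;> exact subset_closure (by simp [a, u, v])

theorem exists_eq_a_zpow_mul_u_zpow_mul_v_pow (hl : 2 ≤ l) (x : G l k) :
    ∃ (p q : ℤ) (e : ℕ), x = a l k ^ p * u l k ^ q * v l k ^ e :=
  satisfiesRels_a_u_v.exists_eq_zpow_mul_zpow_mul_pow hl (closure_a_u_v ▸ mem_top x)

section AffineGroup

variable (R : Type*) [CommRing R]

def unitsMulAut : Rˣ →* MulAut (Multiplicative R) :=
  (MulAutMultiplicative R).symm.toMonoidHom.comp (DistribMulAction.toAddAut Rˣ R)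

/-- `⟨ofAdd r, c⟩` is the affine map `x ↦ c * x + r`. -/
abbrev AffineGroup := Multiplicative R ⋊[unitsMulAut R] Rˣ

variable {R}

theorem unitsMulAut_apply (c : Rˣ) (r : R) : unitsMulAut R c (ofAdd r) = ofAdd (c * r) := rfl

theorem commute_inl_ofAdd_iff (r : R) (x : AffineGroup R) :
    Commute (inl (ofAdd r)) x ↔ (x.right : R) * r = r := by
  rw [Commute, SemiconjBy, SemidirectProduct.ext_iff]
  simp only [mul_left, mul_right, left_inl, right_inl, mul_one, one_mul, map_one,
    MulAut.one_apply, unitsMulAut_apply, and_true]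
  rw [mul_comm, mul_right_inj, EmbeddingLike.apply_eq_iff_eq, eq_comm]

theorem inl_ofAdd_one_zpow (n : ℤ) :
    (inl (ofAdd (1 : R)) : AffineGroup R) ^ n = inl (ofAdd (n : R)) := by
  rw [← map_zpow, ← ofAdd_zsmul, zsmul_one]

theorem inl_ofAdd_one_pow (n : ℕ) :
    (inl (ofAdd (1 : R)) : AffineGroup R) ^ n = inl (ofAdd (n : R)) := by
  rw [← map_pow, ← ofAdd_nsmul, nsmul_one]

end AffineGroup

def unitN₁ (hl : 2 ≤ l) : (ZMod (2 ^ l))ˣ := ⟨n₁ l, n₁ l, n₁_mul_n₁ hl, n₁_mul_n₁ hl⟩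

def unitN₂ (hl : 2 ≤ l) : (ZMod (2 ^ l))ˣ := ⟨n₂ l, n₂ l, n₂_mul_n₂ hl, n₂_mul_n₂ hl⟩

section

variable (hl : 2 ≤ l)

theorem unitN₁_sq : unitN₁ hl ^ 2 = 1 := Units.ext (by simp [sq, unitN₁, n₁_mul_n₁ hl])

theorem unitN₂_sq : unitN₂ hl ^ 2 = 1 := Units.ext (by simp [sq, unitN₂, n₂_mul_n₂ hl])

theorem unitN₂_inv : (unitN₂ hl)⁻¹ = unitN₂ hl := rfl

theorem unitN₁_ne_one : unitN₁ hl ≠ 1 := fun h => n₁_ne_one (by omega) congr(Units.val $h)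

theorem unitN₁_mul_unitN₂_ne_one : unitN₁ hl * unitN₂ hl ≠ 1 := fun h =>
  neg_one_ne_one_of_two_le hl (by rw [← n₁_mul_n₂ hl]; exact congr(Units.val $h))

end

theorem unitN₂_ne_one (hl : 3 ≤ l) : unitN₂ (Nat.le_of_succ_le hl) ≠ 1 := fun h =>
  n₂_ne_one hl congr(Units.val $h)

theorem satisfiesRels_affine (hl : 2 ≤ l) (hk : 2 ∣ k) :
    SatisfiesRels l k (inl (ofAdd 1) : AffineGroup (ZMod (2 ^ l))) (inr (unitN₁ hl))
      (inr (unitN₂ hl)) where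
  pow_a := by rw [inl_ofAdd_one_pow, ZMod.natCast_self, ofAdd_zero, map_one]
  pow_u := by
    obtain ⟨j, rfl⟩ := hk
    rw [← map_pow, pow_mul, unitN₁_sq, one_pow, map_one]
  sq_v := by rw [← map_pow, unitN₂_sq, map_one]
  conj_u_a := by
    rw [← map_inv, ← inl_aut, inl_ofAdd_one_pow, unitsMulAut_apply, mul_one]; rfl
  conj_v_a := by
    nth_rw 2 [← unitN₂_inv hl]
    rw [← inl_aut, inl_ofAdd_one_pow, unitsMulAut_apply, mul_one]; rfl
  conj_v_u := by
    rw [← map_mul, ← map_mul, ← map_inv]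
    congr 1
    ext
    simp only [Units.val_mul, unitN₁, unitN₂, Units.inv_mk]
    linear_combination (n₁ l : ZMod (2 ^ l)) * n₂_mul_n₂ hl

def affineRep (hl : 2 ≤ l) (hk : 2 ∣ k) : G l k →* AffineGroup (ZMod (2 ^ l)) :=
  lift (satisfiesRels_affine hl hk)

def vSign (l k : ℕ) : G l k →* ℤˣ :=
  lift (A := 1) (U := 1) (V := -1) ⟨by simp, by simp, by simp, by simp, by simp, by simp⟩

def linearPart (hl : 2 ≤ l) (hk : 2 ∣ k) : G l k →* (ZMod (2 ^ l))ˣ :=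
  rightHom.comp (affineRep hl hk)

section

variable (hl : 2 ≤ l) (hk : 2 ∣ k)

@[simp] theorem linearPart_a : linearPart hl hk (a l k) = 1 := by
  simp [linearPart, affineRep]

@[simp] theorem linearPart_u : linearPart hl hk (u l k) = unitN₁ hl := by
  simp [linearPart, affineRep]

@[simp] theorem linearPart_v : linearPart hl hk (v l k) = unitN₂ hl := by
  simp [linearPart, affineRep]

end

theorem closure_a_u_eq_ker_vSign (hl : 2 ≤ l) : closure {a l k, u l k} = (vSign l k).ker := by
  refine le_antisymm (closure_le _ |>.mpr ?_) fun x hx => ?_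
  · rintro _ (rfl | rfl) <;> simp [vSign]
  obtain ⟨p, q, e, rfl⟩ := exists_eq_a_zpow_mul_u_zpow_mul_v_pow hl x
  obtain ⟨j, rfl⟩ : Even e := by
    simpa [vSign, neg_one_pow_eq_one_iff_even (R := ℤˣ) (by decide)] using hx
  rw [← two_mul, pow_mul, satisfiesRels_a_u_v.sq_v, one_pow, mul_one]
  exact mul_mem (zpow_mem (subset_closure (by simp)) p) (zpow_mem (subset_closure (by simp)) q)

theorem closure_a_u_sq_eq_ker_linearPart (hl : 3 ≤ l) (hk : 2 ∣ k) :
    closure {a l k, u l k ^ 2} = (linearPart (Nat.le_of_succ_le hl) hk).ker := by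
  refine le_antisymm (closure_le _ |>.mpr ?_) fun x hx => ?_
  · rintro _ (rfl | rfl) <;> simp [unitN₁_sq]
  obtain ⟨p, q, e, rfl⟩ := exists_eq_a_zpow_mul_u_zpow_mul_v_pow (Nat.le_of_succ_le hl) x
  have hqe : unitN₁ (Nat.le_of_succ_le hl) ^ q * unitN₂ (Nat.le_of_succ_le hl) ^ e = 1 := by
    simpa using hx
  obtain ⟨⟨q, rfl⟩, ⟨e, rfl⟩⟩ := even_and_even_of_zpow_mul_pow_eq_one (unitN₁_sq _) (unitN₂_sq _)
    (unitN₁_ne_one _) (unitN₂_ne_one hl) (unitN₁_mul_unitN₂_ne_one _) hqe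
  rw [← two_mul, ← two_mul, pow_mul, satisfiesRels_a_u_v.sq_v, one_pow, mul_one, zpow_mul,
    zpow_ofNat]
  exact mul_mem (zpow_mem (subset_closure (by simp)) p) (zpow_mem (subset_closure (by simp)) q)

theorem affineRep_a_zpow_mul_u_zpow (hl : 2 ≤ l) (hk : 2 ∣ k) (s i : ℤ) :
    affineRep hl hk (a l k ^ s * u l k ^ (2 * i)) = inl (ofAdd (s : ZMod (2 ^ l))) := by
  rw [map_mul, map_zpow, map_zpow, affineRep, lift_a, lift_u, inl_ofAdd_one_zpow, ← map_zpow,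
    zpow_mul, zpow_ofNat, unitN₁_sq, one_zpow, map_one, mul_one]

theorem closure_a_u_sq_le_centralizer (hl : 2 ≤ l) (s i : ℤ) :
    closure {a l k, u l k ^ 2} ≤ centralizer {a l k ^ s * u l k ^ (2 * i)} := by
  have hc := satisfiesRels_a_u_v.commute_u_sq_a (k := k) hl
  rw [closure_le, zpow_mul, zpow_ofNat]
  rintro _ (rfl | rfl) <;> rw [SetLike.mem_coe, mem_centralizer_singleton_iff]
  · exact (((Commute.refl _).zpow_right s).mul_right (hc.symm.zpow_right i)).eq
  · exact ((hc.zpow_right s).mul_right ((Commute.refl _).zpow_right i)).eq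

theorem closure_a_u_le_centralizer (hl : 2 ≤ l) {s : ℤ} (hs : Even s) (i : ℤ) :
    closure {a l k, u l k} ≤ centralizer {a l k ^ s * u l k ^ (2 * i)} := by
  rw [closure_le]
  rintro _ (rfl | rfl)
  · exact closure_a_u_sq_le_centralizer hl s i (subset_closure (by simp))
  · rw [SetLike.mem_coe, mem_centralizer_singleton_iff]
    exact ((satisfiesRels_a_u_v.commute_u_zpow_a_of_even (by omega) hs).mul_right
      (Commute.self_zpow _ _)).eq

theorem centralizer_eq_closure_a_u (hl : 2 ≤ l) {s : ℤ} (hs : Even s) (i : ℤ)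
    (h : a l k ^ s * u l k ^ (2 * i) ∉ center (G l k)) :
    centralizer {a l k ^ s * u l k ^ (2 * i)} = closure {a l k, u l k} := by
  refine le_antisymm (fun x hx => ?_) (closure_a_u_le_centralizer hl hs i)
  by_contra hxN
  have hxv : x * v l k ∈ closure {a l k, u l k} := by
    rw [closure_a_u_eq_ker_vSign hl] at hxN ⊢
    rw [MonoidHom.mem_ker, map_mul, (Int.units_eq_one_or _).resolve_left hxN]
    simp [vSign]
  have hv : v l k ∈ centralizer {a l k ^ s * u l k ^ (2 * i)} := by
    simpa using mul_mem (inv_mem hx) (closure_a_u_le_centralizer hl hs i hxv)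
  refine h (Set.singleton_subset_iff.mp (centralizer_eq_top_iff_subset.mp (eq_top_iff.mpr ?_)))
  rw [← closure_a_u_v, closure_le]
  rintro _ (rfl | rfl | rfl)
  · exact closure_a_u_le_centralizer hl hs i (subset_closure (by simp))
  · exact closure_a_u_le_centralizer hl hs i (subset_closure (by simp))
  · exact hv

theorem centralizer_eq_closure_a_u_sq (hl : 3 ≤ l) (hk : 2 ∣ k) {s : ℤ} (hs : Odd s) (i : ℤ) :
    centralizer {a l k ^ s * u l k ^ (2 * i)} = closure {a l k, u l k ^ 2} := by
  refine le_antisymm (fun x hx => ?_) (closure_a_u_sq_le_centralizer (by omega) s i)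
  have hc : Commute (inl (ofAdd (s : ZMod (2 ^ l))))
      (affineRep (Nat.le_of_succ_le hl) hk x) := by
    rw [← affineRep_a_zpow_mul_u_zpow _ hk s i]
    exact (Commute.map (mem_centralizer_singleton_iff.mp hx).symm _)
  rw [commute_inl_ofAdd_iff] at hc
  rw [closure_a_u_sq_eq_ker_linearPart hl hk, MonoidHom.mem_ker]
  exact Units.ext <| (isUnit_intCast_of_odd hs).mul_right_cancel <| by
    rwa [Units.val_one, one_mul]

theorem closure_a_u_normal (hl : 2 ≤ l) : (closure {a l k, u l k}).Normal := by
  rw [closure_a_u_eq_ker_vSign hl]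
  infer_instance

theorem closure_a_u_sq_normal (hl : 3 ≤ l) (hk : 2 ∣ k) :
    (closure {a l k, u l k ^ 2}).Normal := by
  rw [closure_a_u_sq_eq_ker_linearPart hl hk]
  infer_instance

end ZkDl

open ZkDl

theorem centralizer_even (l k : ℕ) (hl : 3 ≤ l) (hk : 4 ∣ k) (s i : ℤ)
    (h : a l k ^ s * u l k ^ (2 * i) ∉ Subgroup.center (G l k)) :
    (Even s → Subgroup.centralizer {a l k ^ s * u l k ^ (2 * i)} =
      Subgroup.closure {a l k, u l k}) ∧
    (Odd s → Subgroup.centralizer {a l k ^ s * u l k ^ (2 * i)} =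
      Subgroup.closure {a l k, u l k ^ 2}) ∧
    (Subgroup.centralizer {a l k ^ s * u l k ^ (2 * i)}).Normal := by
  have hl₂ : 2 ≤ l := by omega
  have hk₂ : 2 ∣ k := dvd_trans (by norm_num) hk
  refine ⟨fun hs => centralizer_eq_closure_a_u hl₂ hs i h,
    fun hs => centralizer_eq_closure_a_u_sq hl hk₂ hs i, ?_⟩
  rcases Int.even_or_odd s with hs | hs
  · rw [centralizer_eq_closure_a_u hl₂ hs i h]
    exact closure_a_u_normal hl₂
  · rw [centralizer_eq_closure_a_u_sq hl hk₂ hs i]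
    exact closure_a_u_sq_normal hl hk₂
end
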